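/- arXiv:1812.06704 — 2 statements merged into one kernel-verified Lean document; each statement's English description precedes it below -/
import Mathlib

section
/- The character space (the set of nonzero continuous unital *-algebra homomorphisms to ℂ, with the weak-* topology) of the commutative C*-algebra C(X̄) of bounded continuous complex functions on X with uniform radial limits at infinity is homeomorphic to the closed unit ball of X. -/
open MeasureTheory Metric Filter Topology

noncomputable section

/-- `X d` is the Euclidean space `ℝ^d` with its standard inner product and norm. -/
abbrev X (d : ℕ) : Type := EuclideanSpace ℝ (Fin d)

/-- `h` is a boundary function for `f` : `f` has uniform radial limits at infinity given
(on the unit sphere) by the continuous function `h`. -/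
def IsBoundary {E : Type*} [NormedAddCommGroup E] [InnerProductSpace ℝ E]
    (f : E → ℂ) (h : E → ℂ) : Prop :=
  Continuous h ∧
    ∀ ε > 0, ∃ r > 0, ∀ z : E, r ≤ ‖z‖ → ‖f z - h (‖z‖⁻¹ • z)‖ < ε

/-- `f` has uniform radial limits at infinity. -/
def HasUniformRadialLimits {E : Type*} [NormedAddCommGroup E] [InnerProductSpace ℝ E]
    (f : E → ℂ) : Prop :=
  ∃ h : E → ℂ, IsBoundary f h

/-- `C(X̄)` : the closed unital *-subalgebra of `C_b(X)` of bounded continuous complex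
functions on `X` with uniform radial limits at infinity. -/
def CXbar (d : ℕ) : StarSubalgebra ℂ (BoundedContinuousFunction (X d) ℂ) :=
  (StarAlgebra.adjoin ℂ {f : BoundedContinuousFunction (X d) ℂ |
      HasUniformRadialLimits ⇑f}).topologicalClosure

/-!
`x ↦ x / √(1 + ‖x‖²)` (`Homeomorph.unitBall`) embeds `X` densely into the closed unit ball `B`,
and sends a far-away point `x` to within `(1 + ‖x‖²)⁻¹` of its direction `x / ‖x‖`. Hence a
bounded continuous function has uniform radial limits iff it extends continuously to `B`, the
extension being given on the sphere by the radial limits. So composing with the embedding is an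
isometric *-isomorphism from `C(B, ℂ)` onto `C(X̄)`, and Gelfand duality identifies the character
space of `C(B, ℂ)` with `B`.
-/

open Bornology
open scoped BoundedContinuousFunction

section NormedSpace

variable {E : Type*} [NormedAddCommGroup E] [NormedSpace ℝ E]

def toClosedUnitBall : C(E, closedBall (0 : E) 1) :=
  ⟨fun x => Set.inclusion ball_subset_closedBall (Homeomorph.unitBall x),
    (continuous_inclusion (ball_subset_closedBall : ball (0 : E) 1 ⊆ _)).comp
      Homeomorph.unitBall.continuous⟩

lemma coe_toClosedUnitBall (x : E) :
    (toClosedUnitBall x : E) = (√(1 + ‖x‖ ^ 2))⁻¹ • x :=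
  (Homeomorph.unitBall_apply_coe x).trans (OpenPartialHomeomorph.univUnitBall_apply x)

lemma norm_toClosedUnitBall_le_one (x : E) : ‖(toClosedUnitBall x : E)‖ ≤ 1 :=
  mem_closedBall_zero_iff.mp (toClosedUnitBall x).2

lemma one_sub_norm_toClosedUnitBall_sq (x : E) :
    1 - ‖(toClosedUnitBall x : E)‖ ^ 2 = (1 + ‖x‖ ^ 2)⁻¹ := by
  have h : 0 < 1 + ‖x‖ ^ 2 := by positivity
  rw [coe_toClosedUnitBall, norm_smul, mul_pow, norm_inv, Real.norm_of_nonneg (by positivity),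
    inv_pow, Real.sq_sqrt h.le]
  field_simp
  ring

lemma norm_toClosedUnitBall_sub_le (x : E) :
    ‖(toClosedUnitBall x : E) - ‖x‖⁻¹ • x‖ ≤ (1 + ‖x‖ ^ 2)⁻¹ := by
  rcases eq_or_ne x 0 with rfl | hx
  · simpa using norm_toClosedUnitBall_le_one (0 : E)
  -- The difference is a nonpositive multiple of `x`, of norm `1 - s ≤ 1 - s ^ 2`.
  set s := ‖(toClosedUnitBall x : E)‖ with hs_def
  have hs : s = (√(1 + ‖x‖ ^ 2))⁻¹ * ‖x‖ := by
    rw [hs_def, coe_toClosedUnitBall, norm_smul, Real.norm_of_nonneg (by positivity)]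
  have hsub : (toClosedUnitBall x : E) - ‖x‖⁻¹ • x = ((s - 1) * ‖x‖⁻¹) • x := by
    rw [hs, coe_toClosedUnitBall, ← sub_smul]
    congr 1
    field_simp [norm_ne_zero_iff.mpr hx]
  have hs1 : s ≤ 1 := norm_toClosedUnitBall_le_one x
  rw [hsub, norm_smul, Real.norm_eq_abs, abs_mul, abs_of_nonpos (by linarith),
    abs_of_nonneg (by positivity), inv_mul_cancel_right₀ (norm_ne_zero_iff.mpr hx),
    ← one_sub_norm_toClosedUnitBall_sq]
  nlinarith [norm_nonneg (toClosedUnitBall x : E)]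

lemma tendsto_toClosedUnitBall_sub_cobounded :
    Tendsto (fun x : E => (toClosedUnitBall x : E) - ‖x‖⁻¹ • x) (cobounded E) (𝓝 0) :=
  squeeze_zero_norm norm_toClosedUnitBall_sub_le <| tendsto_inv_atTop_zero.comp <|
    tendsto_atTop_add_const_left _ _ <| (tendsto_pow_atTop two_ne_zero).comp
      tendsto_norm_cobounded_atTop

lemma comap_toClosedUnitBall_le_cobounded {b : closedBall (0 : E) 1} (hb : ‖(b : E)‖ = 1) :
    comap toClosedUnitBall (𝓝 b) ≤ cobounded E := by
  have hnorm : Tendsto (fun x => ‖(toClosedUnitBall x : E)‖) (comap toClosedUnitBall (𝓝 b))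
      (𝓝 1) := by
    have := ((continuous_norm.comp continuous_subtype_val).tendsto b).comp
      (tendsto_comap (f := toClosedUnitBall))
    simpa only [Function.comp_def, hb] using this
  have hinv : Tendsto (fun x : E => (1 + ‖x‖ ^ 2)⁻¹) (comap toClosedUnitBall (𝓝 b))
      (𝓝[>] 0) := by
    refine tendsto_nhdsWithin_iff.mpr ⟨?_, .of_forall fun x => Set.mem_Ioi.mpr (by positivity)⟩
    simpa [one_sub_norm_toClosedUnitBall_sq] using (hnorm.pow 2).const_sub 1
  have hsq := tendsto_atTop_add_const_right _ (-1) hinv.inv_tendsto_nhdsGT_zero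
  simp only [Pi.inv_apply, inv_inv, add_neg_cancel_comm] at hsq
  rw [← tendsto_id', ← tendsto_norm_atTop_iff_cobounded]
  simpa only [Function.comp_def, id, Real.sqrt_sq (norm_nonneg _)] using
    Real.tendsto_sqrt_atTop.comp hsq

lemma isDenseInducing_toClosedUnitBall : IsDenseInducing (toClosedUnitBall (E := E)) where
  toIsInducing := (IsEmbedding.inclusion ball_subset_closedBall).isInducing.comp
    Homeomorph.unitBall.isInducing
  dense := by
    have : DenseRange (Set.inclusion (ball_subset_closedBall : ball (0 : E) 1 ⊆ _)) :=
      (denseRange_inclusion_iff _).mpr (closure_ball (0 : E) one_ne_zero).ge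
    exact this.comp Homeomorph.unitBall.surjective.denseRange (continuous_inclusion _)

lemma exists_toClosedUnitBall_eq {b : closedBall (0 : E) 1} (hb : ‖(b : E)‖ < 1) :
    ∃ x, toClosedUnitBall x = b := by
  refine ⟨Homeomorph.unitBall.symm ⟨b, mem_ball_zero_iff.mpr hb⟩, Subtype.ext ?_⟩
  simp [toClosedUnitBall]

def radialRetraction : C(E, closedBall (0 : E) 1) :=
  ⟨fun u => ⟨(max 1 ‖u‖)⁻¹ • u, by
    rw [mem_closedBall_zero_iff, norm_smul, norm_inv, Real.norm_of_nonneg (by positivity),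
      inv_mul_le_one₀ (by positivity)]
    exact le_max_right _ _⟩, by
    refine Continuous.subtype_mk (Continuous.smul ?_ continuous_id) _
    exact (continuous_const.max continuous_norm).inv₀ fun u => by positivity⟩

lemma radialRetraction_of_norm_le_one {u : E} (hu : ‖u‖ ≤ 1) : (radialRetraction u : E) = u := by
  simp [radialRetraction, max_eq_left hu]

end NormedSpace

lemma UniformContinuous.tendsto_dist_comp_zero {α β ι : Type*} [PseudoMetricSpace α]
    [PseudoMetricSpace β] {g : α → β} (hg : UniformContinuous g) {l : Filter ι} {a b : ι → α}
    (h : Tendsto (fun i => dist (a i) (b i)) l (𝓝 0)) :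
    Tendsto (fun i => dist (g (a i)) (g (b i))) l (𝓝 0) := by
  have hab : Tendsto (fun i => (a i, b i)) l (uniformity α) :=
    tendsto_uniformity_iff_dist_tendsto_zero.mpr h
  exact tendsto_uniformity_iff_dist_tendsto_zero.mp (Tendsto.comp hg hab)

lemma BoundedContinuousFunction.norm_compContinuous_of_denseRange {α β γ : Type*}
    [TopologicalSpace α] [SeminormedAddCommGroup β] [TopologicalSpace γ] (f : α →ᵇ β)
    {g : C(γ, α)} (hg : DenseRange g) : ‖f.compContinuous g‖ = ‖f‖ :=
  (norm_compContinuous_le f g).antisymm <| (norm_le (norm_nonneg _)).mpr fun a =>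
    hg.induction_on a (isClosed_le (by fun_prop) continuous_const)
      (f.compContinuous g).norm_coe_le_norm

namespace StarAlgEquiv
open WeakDual
variable {𝕜 A B : Type*} [NontriviallyNormedField 𝕜]
  [NormedRing A] [NormedAlgebra 𝕜 A] [CompleteSpace A] [StarRing A]
  [NormedRing B] [NormedAlgebra 𝕜 B] [CompleteSpace B] [StarRing B]

def characterSpaceHomeomorph (e : A ≃⋆ₐ[𝕜] B) : characterSpace 𝕜 B ≃ₜ characterSpace 𝕜 A where
  toFun := CharacterSpace.compContinuousMap (e : A →⋆ₐ[𝕜] B)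
  invFun := CharacterSpace.compContinuousMap (e.symm : B →⋆ₐ[𝕜] A)
  left_inv χ := CharacterSpace.ext fun b => congrArg χ (e.apply_symm_apply b)
  right_inv χ := CharacterSpace.ext fun a => congrArg χ (e.symm_apply_apply a)

end StarAlgEquiv

section InnerProductSpace

variable {E : Type*} [NormedAddCommGroup E] [InnerProductSpace ℝ E]

lemma isBoundary_iff_tendsto {f h : E → ℂ} :
    IsBoundary f h ↔
      Continuous h ∧ Tendsto (fun z => f z - h (‖z‖⁻¹ • z)) (cobounded E) (𝓝 0) := by
  refine and_congr_right fun _ => ?_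
  simp only [Metric.tendsto_nhds, dist_zero_right, ← comap_norm_atTop, eventually_comap,
    eventually_atTop]
  refine forall₂_congr fun ε _ => ⟨fun ⟨r, _, hr⟩ => ⟨r, fun _ hz z hzb => hr z (hzb ▸ hz)⟩,
    fun ⟨r, hr⟩ => ⟨max r 1, by positivity, fun z hz => hr _ (le_of_max_le_left hz) z rfl⟩⟩

lemma exists_comp_toClosedUnitBall_eq {f h : E → ℂ} (hf : Continuous f) (hb : IsBoundary f h) :
    ∃ g : C(closedBall (0 : E) 1, ℂ), ∀ x, g (toClosedUnitBall x) = f x := by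
  have di := isDenseInducing_toClosedUnitBall (E := E)
  refine ⟨⟨di.extend f, di.continuous_extend fun b => ?_⟩, di.extend_eq hf⟩
  rcases (mem_closedBall_zero_iff.mp b.2).lt_or_eq with hb1 | hb1
  · obtain ⟨x, rfl⟩ := exists_toClosedUnitBall_eq hb1
    exact ⟨f x, di.isInducing.nhds_eq_comap x ▸ hf.tendsto x⟩
  · -- Approaching the sphere point `b`, `z` goes to infinity with direction tending to `b`.
    refine ⟨h b, ?_⟩
    have hcob := comap_toClosedUnitBall_le_cobounded hb1
    have hdir : Tendsto (fun z : E => ‖z‖⁻¹ • z) (comap toClosedUnitBall (𝓝 b)) (𝓝 b) := by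
      have := ((continuous_subtype_val.tendsto b).comp tendsto_comap).sub
        (tendsto_toClosedUnitBall_sub_cobounded.mono_left hcob)
      simpa only [Function.comp_def, sub_sub_cancel, sub_zero] using this
    have := ((isBoundary_iff_tendsto.mp hb).2.mono_left hcob).add
      ((hb.1.tendsto _).comp hdir)
    simpa only [Function.comp_def, sub_add_cancel, zero_add] using this

variable [ProperSpace E]

lemma isBoundary_comp_toClosedUnitBall (g : C(closedBall (0 : E) 1, ℂ)) :
    IsBoundary (fun x => g (toClosedUnitBall x)) (fun u => g (radialRetraction u)) := by
  refine isBoundary_iff_tendsto.mpr ⟨by fun_prop, ?_⟩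
  have hunit (z : E) : (radialRetraction (‖z‖⁻¹ • z) : E) = ‖z‖⁻¹ • z := by
    refine radialRetraction_of_norm_le_one ?_
    rcases eq_or_ne z 0 with rfl | hz
    · simp
    · exact (norm_smul_inv_norm hz).le
  have hdist : Tendsto (fun z => dist (toClosedUnitBall z) (radialRetraction (‖z‖⁻¹ • z)))
      (cobounded E) (𝓝 0) := by
    simpa only [Subtype.dist_eq, hunit, dist_eq_norm, norm_zero] using
      (tendsto_toClosedUnitBall_sub_cobounded (E := E)).norm
  have hg : UniformContinuous g :=
    CompactSpace.uniformContinuous_of_continuous g.continuous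
  refine tendsto_zero_iff_norm_tendsto_zero.mpr ?_
  simpa only [dist_eq_norm] using hg.tendsto_dist_comp_zero hdist

def compToClosedUnitBall : C(closedBall (0 : E) 1, ℂ) →⋆ₐ[ℂ] E →ᵇ ℂ where
  toFun g := (BoundedContinuousFunction.mkOfCompact g).compContinuous toClosedUnitBall
  map_one' := rfl
  map_mul' _ _ := rfl
  map_zero' := rfl
  map_add' _ _ := rfl
  commutes' _ := rfl
  map_star' _ := rfl

lemma isometry_compToClosedUnitBall : Isometry (compToClosedUnitBall (E := E)) :=
  AddMonoidHomClass.isometry_of_norm _ fun g =>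
    (BoundedContinuousFunction.norm_compContinuous_of_denseRange _
      isDenseInducing_toClosedUnitBall.dense).trans (BoundedContinuousFunction.norm_mkOfCompact g)

lemma hasUniformRadialLimits_iff_mem_range (f : E →ᵇ ℂ) :
    HasUniformRadialLimits f ↔ f ∈ (compToClosedUnitBall (E := E)).range := by
  constructor
  · rintro ⟨h, hb⟩
    obtain ⟨g, hg⟩ := exists_comp_toClosedUnitBall_eq f.continuous hb
    exact ⟨g, BoundedContinuousFunction.ext hg⟩
  · rintro ⟨g, rfl⟩
    exact ⟨_, isBoundary_comp_toClosedUnitBall g⟩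

lemma topologicalClosure_adjoin_hasUniformRadialLimits :
    (StarAlgebra.adjoin ℂ {f : E →ᵇ ℂ | HasUniformRadialLimits ⇑f}).topologicalClosure =
      (compToClosedUnitBall (E := E)).range := by
  have hset : {f : E →ᵇ ℂ | HasUniformRadialLimits ⇑f} =
      ((compToClosedUnitBall (E := E)).range : Set (E →ᵇ ℂ)) :=
    Set.ext hasUniformRadialLimits_iff_mem_range
  have hclosed : IsClosed ((compToClosedUnitBall (E := E)).range : Set (E →ᵇ ℂ)) :=
    isometry_compToClosedUnitBall.isClosedEmbedding.isClosed_range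
  rw [hset, StarAlgebra.adjoin_eq]
  exact (StarSubalgebra.topologicalClosure_minimal le_rfl hclosed).antisymm
    (StarSubalgebra.le_topologicalClosure _)

end InnerProductSpace

theorem characterSpace_CXbar_homeomorph_closedBall_general (d : ℕ) :
    Nonempty ((WeakDual.characterSpace ℂ ↥(CXbar d)) ≃ₜ (Metric.closedBall (0 : X d) 1)) := by
  have hrange : CXbar d = compToClosedUnitBall.range :=
    topologicalClosure_adjoin_hasUniformRadialLimits
  have hiso := isometry_compToClosedUnitBall (E := X d)
  have : CompleteSpace compToClosedUnitBall.range :=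
    hiso.isUniformInducing.isComplete_range.completeSpace_coe
  rw [hrange]
  exact ⟨(StarAlgEquiv.ofInjective _ hiso.injective).characterSpaceHomeomorph.trans
    (WeakDual.CharacterSpace.homeoEval _ ℂ).symm⟩

/-- The character space (with the weak-* topology) of the commutative C*-algebra `C(X̄)` of
bounded continuous complex functions on `X` with uniform radial limits at infinity is
homeomorphic to the closed unit ball of `X`. -/
theorem characterSpace_CXbar_homeomorph_closedBall (d : ℕ) (hd : 1 ≤ d) :
    Nonempty ((WeakDual.characterSpace ℂ ↥(CXbar d)) ≃ₜ (Metric.closedBall (0 : X d) 1)) :=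
  characterSpace_CXbar_homeomorph_closedBall_general d
end
end

section
/- Let f be a bounded continuous complex function on X with uniform radial limits at infinity. Then for every R > 0 and every ε > 0 there exists M > 0 such that |f(x) − f(y)| < ε whenever ‖x‖ ≥ M and ‖x − y‖ ≤ R. In other words, f(x) − f(y) tends to 0 as ‖x‖ → ∞ uniformly over pairs (x,y) with ‖x − y‖ bounded. -/
open MeasureTheory Metric Filter Topology

noncomputable section

/-- The generating set of the algebra `E_S(X)` : functions of the form `g ∘ π_Y` with `Y ∈ S`
and `g` a bounded continuous function on `Y^⊥` having uniform radial limits at infinity. -/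
def projGen {E : Type*} [NormedAddCommGroup E] [InnerProductSpace ℝ E]
    [FiniteDimensional ℝ E] (S : Set (Submodule ℝ E)) :
    Set (BoundedContinuousFunction E ℂ) :=
  { f | ∃ Y ∈ S, ∃ g : BoundedContinuousFunction (↥Yᗮ) ℂ,
      HasUniformRadialLimits ⇑g ∧ ∀ x : E, f x = g (Submodule.orthogonalProjection Yᗮ x) }

/-- `E_S(X)` : the smallest closed unital *-subalgebra of `C_b(X)` containing all `g ∘ π_Y`
with `Y ∈ S` and `g` having uniform radial limits at infinity. -/
def ES {E : Type*} [NormedAddCommGroup E] [InnerProductSpace ℝ E]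
    [FiniteDimensional ℝ E] (S : Set (Submodule ℝ E)) :
    StarSubalgebra ℂ (BoundedContinuousFunction E ℂ) :=
  (StarAlgebra.adjoin ℂ (projGen S)).topologicalClosure

/-!
Write `u(x) = ‖x‖⁻¹ • x`. If `‖x - y‖ ≤ R`, then `‖u(x) - u(y)‖ ≤ 2R / ‖x‖`, so for large `‖x‖`
the directions `u(x)`, `u(y)` are close, and `h(u(x))`, `h(u(y))` are close by uniform continuity
of the boundary function `h` on the compact unit ball. Both `x` and `y` are far out, so `f(x)` and
`f(y)` are close to `h(u(x))` and `h(u(y))` respectively.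
-/

theorem norm_inv_norm_smul_sub_inv_norm_smul_le {E : Type*} [NormedAddCommGroup E]
    [NormedSpace ℝ E] {x : E} (hx : x ≠ 0) (y : E) :
    ‖‖x‖⁻¹ • x - ‖y‖⁻¹ • y‖ ≤ 2 * ‖x - y‖ / ‖x‖ := by
  have hxpos : 0 < ‖x‖ := norm_pos_iff.2 hx
  have hsplit : ‖x‖⁻¹ • x - ‖y‖⁻¹ • y = ‖x‖⁻¹ • (x - y) + (‖x‖⁻¹ - ‖y‖⁻¹) • y := by
    rw [smul_sub, sub_smul]; abel
  have hradial : ‖(‖x‖⁻¹ - ‖y‖⁻¹) • y‖ ≤ ‖x - y‖ / ‖x‖ := by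
    rcases eq_or_ne y 0 with rfl | hy
    · simp only [smul_zero, norm_zero]; positivity
    have hypos : 0 < ‖y‖ := norm_pos_iff.2 hy
    calc ‖(‖x‖⁻¹ - ‖y‖⁻¹) • y‖ = |‖x‖ - ‖y‖| / ‖x‖ := by
          rw [norm_smul, Real.norm_eq_abs, inv_sub_inv hxpos.ne' hypos.ne', abs_div,
            abs_of_pos (mul_pos hxpos hypos), abs_sub_comm]
          field_simp
      _ ≤ ‖x - y‖ / ‖x‖ := by gcongr; exact abs_norm_sub_norm_le x y
  calc ‖‖x‖⁻¹ • x - ‖y‖⁻¹ • y‖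
      ≤ ‖‖x‖⁻¹ • (x - y)‖ + ‖(‖x‖⁻¹ - ‖y‖⁻¹) • y‖ := hsplit ▸ norm_add_le _ _
    _ ≤ ‖x - y‖ / ‖x‖ + ‖x - y‖ / ‖x‖ := by
        gcongr
        rw [norm_smul, norm_inv, norm_norm, inv_mul_eq_div]
    _ = 2 * ‖x - y‖ / ‖x‖ := by ring

theorem IsBoundary.exists_forall_norm_sub_lt {E : Type*} [NormedAddCommGroup E]
    [InnerProductSpace ℝ E] [ProperSpace E] {f h : E → ℂ} (hfh : IsBoundary f h)
    {R ε : ℝ} (hR : 0 ≤ R) (hε : 0 < ε) :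
    ∃ M > (0 : ℝ), ∀ x y : E, M ≤ ‖x‖ → ‖x - y‖ ≤ R → ‖f x - f y‖ < ε := by
  obtain ⟨r, hr, hfr⟩ := hfh.2 (ε / 3) (by positivity)
  obtain ⟨δ, hδ, hhδ⟩ := Metric.uniformContinuousOn_iff.1
    ((isCompact_closedBall (0 : E) 1).uniformContinuousOn_of_continuous hfh.1.continuousOn)
    (ε / 3) (by positivity)
  refine ⟨r + R + 2 * R / δ + 1, by positivity, fun x y hx hxy => ?_⟩
  have hRδ : 0 ≤ 2 * R / δ := by positivity
  have hxr : r ≤ ‖x‖ := by linarith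
  have hyr : r ≤ ‖y‖ := by linarith [norm_sub_norm_le x y]
  have hxpos : 0 < ‖x‖ := by linarith
  have hdir : dist (‖x‖⁻¹ • x) (‖y‖⁻¹ • y) < δ := by
    rw [dist_eq_norm]
    refine (norm_inv_norm_smul_sub_inv_norm_smul_le (norm_pos_iff.1 hxpos) y).trans_lt ?_
    rw [div_lt_iff₀ hxpos]
    have : 2 * R < δ * ‖x‖ := by
      rw [← div_lt_iff₀' hδ]; linarith
    linarith
  have hh : ‖h (‖x‖⁻¹ • x) - h (‖y‖⁻¹ • y)‖ < ε / 3 := by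
    rw [← dist_eq_norm]
    exact hhδ _ (inv_norm_smul_mem_unitClosedBall x) _ (inv_norm_smul_mem_unitClosedBall y) hdir
  calc ‖f x - f y‖
      = ‖(f x - h (‖x‖⁻¹ • x)) + (h (‖x‖⁻¹ • x) - h (‖y‖⁻¹ • y)) - (f y - h (‖y‖⁻¹ • y))‖ := by
        ring_nf
    _ ≤ ‖f x - h (‖x‖⁻¹ • x)‖ + ‖h (‖x‖⁻¹ • x) - h (‖y‖⁻¹ • y)‖
          + ‖f y - h (‖y‖⁻¹ • y)‖ := (norm_sub_le _ _).trans (by gcongr; exact norm_add_le _ _)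
    _ < ε / 3 + ε / 3 + ε / 3 := by
        gcongr
        · exact hfr x hxr
        · exact hfr y hyr
    _ = ε := by ring

theorem oscillation_small_at_infinity_general (d : ℕ)
    (f : BoundedContinuousFunction (X d) ℂ) (hf : HasUniformRadialLimits ⇑f) :
    ∀ R > (0 : ℝ), ∀ ε > (0 : ℝ), ∃ M > (0 : ℝ), ∀ x y : X d,
      M ≤ ‖x‖ → ‖x - y‖ ≤ R → ‖f x - f y‖ < ε := by
  obtain ⟨h, hfh⟩ := hf
  intro R hR ε hε
  exact hfh.exists_forall_norm_sub_lt hR.le hε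

/-- If `f` is bounded continuous with uniform radial limits at infinity, then
`f(x) − f(y) → 0` as `‖x‖ → ∞`, uniformly over pairs `(x, y)` with `‖x − y‖` bounded. -/
theorem oscillation_small_at_infinity (d : ℕ) (hd : 1 ≤ d)
    (f : BoundedContinuousFunction (X d) ℂ) (hf : HasUniformRadialLimits ⇑f) :
    ∀ R > (0 : ℝ), ∀ ε > (0 : ℝ), ∃ M > (0 : ℝ), ∀ x y : X d,
      M ≤ ‖x‖ → ‖x - y‖ ≤ R → ‖f x - f y‖ < ε :=
  oscillation_small_at_infinity_general d f hf
end
end
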